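/- The image σ(ℂ³) is exactly the set {s ∈ ℝ⁵ : s₅ ≥ max{0, −2s₃, 2s₄} and s₁² + s₂² = s₅(s₅ + 2s₃)(s₅ − 2s₄)}. -/

import Mathlib

/-!
Writing `a, b, c` for `|z₁|², |z₂|², |z₃|²`, the map gives `s₅ = c`, `s₅ + 2s₃ = b`, `s₅ − 2s₄ = a`
and `s₁ + is₂ = −conj(z₁z₂z₃)`, whose squared modulus is `abc`. Conversely, for a point of the
set put `z₁ = √a`, `z₂ = √b` and let `z₃` be `√c` times the phase of the required product.
-/

/-- The invariant map `σ = (σ₁,…,σ₅) : ℂ³ → ℝ⁵` with `σ₁ + iσ₂ = −conj(z₁z₂z₃)`,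
`σ₃ = ½(|z₂|² − |z₃|²)`, `σ₄ = ½(|z₃|² − |z₁|²)`, `σ₅ = |z₃|²`. -/
noncomputable def sigmaMap (z : ℂ × ℂ × ℂ) : Fin 5 → ℝ :=
  ![(-(starRingEnd ℂ) (z.1 * z.2.1 * z.2.2)).re,
    (-(starRingEnd ℂ) (z.1 * z.2.1 * z.2.2)).im,
    (‖z.2.1‖ ^ 2 - ‖z.2.2‖ ^ 2) / 2,
    (‖z.2.2‖ ^ 2 - ‖z.1‖ ^ 2) / 2,
    ‖z.2.2‖ ^ 2]

open Complex ComplexConjugate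

theorem Complex.exists_norm_eq_and_mul_eq {w : ℂ} {t r : ℝ} (hr : 0 ≤ r) (h : ‖w‖ = t * r) :
    ∃ z : ℂ, ‖z‖ = r ∧ t * z = w :=
  ⟨r * exp (arg w * I), by simp [abs_of_nonneg hr], by
    rw [← mul_assoc, ← ofReal_mul, ← h, norm_mul_exp_arg_mul_I]⟩

theorem Complex.sq_norm_mk (x y : ℝ) : ‖(⟨x, y⟩ : ℂ)‖ ^ 2 = x ^ 2 + y ^ 2 := by
  rw [Complex.sq_norm, normSq_mk]; ring

theorem sigmaMap_eq_iff (z : ℂ × ℂ × ℂ) (s : Fin 5 → ℝ) :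
    sigmaMap z = s ↔
      -conj (z.1 * z.2.1 * z.2.2) = ⟨s 0, s 1⟩ ∧ ‖z.1‖ ^ 2 = s 4 - 2 * s 3 ∧
        ‖z.2.1‖ ^ 2 = s 4 + 2 * s 2 ∧ ‖z.2.2‖ ^ 2 = s 4 := by
  simp only [funext_iff, Fin.forall_fin_succ, Fin.reduceSucc, sigmaMap, Complex.ext_iff,
    Fin.isValue, Matrix.cons_val_zero, Matrix.cons_val_one, Matrix.cons_val_two,
    Matrix.cons_val_three, Matrix.cons_val_four, Matrix.head_cons, Matrix.tail_cons,
    IsEmpty.forall_iff, and_true]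
  constructor
  · rintro ⟨h0, h1, h2, h3, h4⟩
    refine ⟨⟨h0, h1⟩, ?_, ?_, h4⟩ <;> linarith
  · rintro ⟨⟨h0, h1⟩, h3, h2, h4⟩
    refine ⟨h0, h1, ?_, ?_, h4⟩ <;> linarith

/-- The image of `σ` is the semi-algebraic set
`{s ∈ ℝ⁵ : s₅ ≥ max {0, −2s₃, 2s₄}, s₁² + s₂² = s₅(s₅ + 2s₃)(s₅ − 2s₄)}`. -/
theorem sigma_range :
    Set.range sigmaMap =
      {s : Fin 5 → ℝ |
        max 0 (max (-2 * s 2) (2 * s 3)) ≤ s 4 ∧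
        (s 0) ^ 2 + (s 1) ^ 2 = s 4 * (s 4 + 2 * s 2) * (s 4 - 2 * s 3)} := by
  ext s
  simp only [Set.mem_range, Set.mem_ofPred_eq, max_le_iff, sigmaMap_eq_iff]
  constructor
  · rintro ⟨⟨z₁, z₂, z₃⟩, hw, h₁, h₂, h₃⟩
    refine ⟨⟨h₃ ▸ by positivity, by linarith [sq_nonneg ‖z₂‖], by linarith [sq_nonneg ‖z₁‖]⟩, ?_⟩
    rw [← sq_norm_mk, ← hw, ← h₁, ← h₂, ← h₃]
    simp only [norm_neg, norm_conj, norm_mul]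
    ring
  · rintro ⟨⟨hc, hb, ha⟩, hs⟩
    have hw : ‖-conj (⟨s 0, s 1⟩ : ℂ)‖ = √(s 4 - 2 * s 3) * √(s 4 + 2 * s 2) * √(s 4) := by
      rw [norm_neg, norm_conj, ← Real.sqrt_sq (norm_nonneg _), sq_norm_mk, hs,
        ← Real.sqrt_mul (by linarith), ← Real.sqrt_mul (mul_nonneg (by linarith) (by linarith))]
      ring_nf
    obtain ⟨z₃, hz₃, hprod⟩ := exists_norm_eq_and_mul_eq (Real.sqrt_nonneg _) hw
    refine ⟨(√(s 4 - 2 * s 3), √(s 4 + 2 * s 2), z₃), ?_, ?_, ?_, ?_⟩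
    · push_cast at hprod
      simp [hprod]
    · simp [Real.sq_sqrt (by linarith : 0 ≤ s 4 - 2 * s 3)]
    · simp [Real.sq_sqrt (by linarith : 0 ≤ s 4 + 2 * s 2)]
    · rw [hz₃, Real.sq_sqrt hc]
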